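/- Let f be an analytic circle diffeomorphism with lift F, let p, q be coprime integers with q ≥ 1, and suppose there exists x₀ ∈ ℝ with F^q(x₀) = x₀ + p and (F^q)'(x₀) ≠ 1 (a hyperbolic periodic orbit of rotation number p/q). Then there exists ε > 0 such that for every real ω with |ω| < ε, one has rot(f + ω) = p/q (mod 1). In particular, ω = 0 is an interior point of the interval I_{p/q} = {ω ∈ ℝ/ℤ : rot(f+ω) = p/q}. -/

import Mathlib

open Filter Topology

/-- An analytic circle diffeomorphism, given by an analytic, strictly increasing lift
`F : ℝ → ℝ` with `F (x+1) = F x + 1`, together with an analytic inverse. -/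
structure AnalyticCircleDiffeo where
  toFun : ℝ → ℝ
  invFun : ℝ → ℝ
  analyticAt_toFun : ∀ x, AnalyticAt ℝ toFun x
  analyticAt_invFun : ∀ x, AnalyticAt ℝ invFun x
  strictMono_toFun : StrictMono toFun
  leftInverse : Function.LeftInverse invFun toFun
  rightInverse : Function.RightInverse invFun toFun
  map_add_one : ∀ x, toFun (x + 1) = toFun x + 1

namespace AnalyticCircleDiffeo

/-- The rotation number of (the chosen lift of) a circle diffeomorphism. -/
noncomputable def rot (f : AnalyticCircleDiffeo) : ℝ :=
  limUnder atTop fun n : ℕ => f.toFun^[n] 0 / n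

/-- The composition of two analytic circle diffeomorphisms. -/
def comp (f g : AnalyticCircleDiffeo) : AnalyticCircleDiffeo where
  toFun := f.toFun ∘ g.toFun
  invFun := g.invFun ∘ f.invFun
  analyticAt_toFun := fun x => (f.analyticAt_toFun _).comp (g.analyticAt_toFun x)
  analyticAt_invFun := fun x => (g.analyticAt_invFun _).comp (f.analyticAt_invFun x)
  strictMono_toFun := f.strictMono_toFun.comp g.strictMono_toFun
  leftInverse := fun x => by
    show g.invFun (f.invFun (f.toFun (g.toFun x))) = x
    rw [f.leftInverse (g.toFun x), g.leftInverse x]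
  rightInverse := fun x => by
    show f.toFun (g.toFun (g.invFun (f.invFun x))) = x
    rw [g.rightInverse (f.invFun x), f.rightInverse x]
  map_add_one := fun x => by
    show f.toFun (g.toFun (x + 1)) = f.toFun (g.toFun x) + 1
    rw [g.map_add_one, f.map_add_one]

/-- The inverse of an analytic circle diffeomorphism. -/
def symm (f : AnalyticCircleDiffeo) : AnalyticCircleDiffeo where
  toFun := f.invFun
  invFun := f.toFun
  analyticAt_toFun := f.analyticAt_invFun
  analyticAt_invFun := f.analyticAt_toFun
  strictMono_toFun := fun x y hxy => by
    have h := f.strictMono_toFun.lt_iff_lt (a := f.invFun x) (b := f.invFun y)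
    rw [f.rightInverse x, f.rightInverse y] at h
    exact h.mp hxy
  leftInverse := f.rightInverse
  rightInverse := f.leftInverse
  map_add_one := fun x => by
    apply f.strictMono_toFun.injective
    rw [f.rightInverse, f.map_add_one, f.rightInverse]

/-- The circle diffeomorphism `f + ω : x ↦ f x + ω`. -/
noncomputable def addConst (f : AnalyticCircleDiffeo) (ω : ℝ) : AnalyticCircleDiffeo where
  toFun := fun x => f.toFun x + ω
  invFun := fun x => f.invFun (x - ω)
  analyticAt_toFun := fun x => (f.analyticAt_toFun x).add analyticAt_const
  analyticAt_invFun := fun x => by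
    have h1 : AnalyticAt ℝ (fun y : ℝ => y - ω) x := analyticAt_id.sub analyticAt_const
    have h2 : AnalyticAt ℝ (f.invFun ∘ fun y : ℝ => y - ω) x :=
      AnalyticAt.comp (g := f.invFun) (f := fun y : ℝ => y - ω)
        (f.analyticAt_invFun (x - ω)) h1
    exact h2
  strictMono_toFun := fun x y hxy => by
    show f.toFun x + ω < f.toFun y + ω
    linarith [f.strictMono_toFun hxy]
  leftInverse := fun x => by
    show f.invFun (f.toFun x + ω - ω) = x
    rw [add_sub_cancel_right, f.leftInverse x]
  rightInverse := fun x => by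
    show f.toFun (f.invFun (x - ω)) + ω = x
    rw [f.rightInverse (x - ω)]; ring
  map_add_one := fun x => by
    show f.toFun (x + 1) + ω = f.toFun x + ω + 1
    rw [f.map_add_one]; ring

/-- Two circle diffeomorphisms are analytically conjugate: `f₂ = h ∘ f₁ ∘ h⁻¹` as maps
of `ℝ/ℤ`; in terms of lifts, `h ∘ f₁ = f₂ ∘ h + k` for some integer `k`. -/
def Conjugate (f₁ f₂ : AnalyticCircleDiffeo) : Prop :=
  ∃ h : AnalyticCircleDiffeo, ∃ k : ℤ,
    ∀ x, h.toFun (f₁.toFun x) = f₂.toFun (h.toFun x) + k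

/-- `f` is the identity of `ℝ/ℤ`, i.e. its lift is an integer translation. -/
def IsId (f : AnalyticCircleDiffeo) : Prop :=
  ∃ k : ℤ, ∀ x, f.toFun x = x + k

/-- A circle diffeomorphism (with rotation number `0 mod 1`) is hyperbolic if it has a
fixed point on `ℝ/ℤ` and the multiplier at every fixed point is `≠ 1`. -/
def Hyperbolic (f : AnalyticCircleDiffeo) : Prop :=
  (∃ x : ℝ, ∃ k : ℤ, f.toFun x = x + k) ∧
    ∀ x : ℝ, (∃ k : ℤ, f.toFun x = x + k) → deriv f.toFun x ≠ 1

end AnalyticCircleDiffeo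

/-- A real number is Diophantine. -/
def Diophantine (ρ : ℝ) : Prop :=
  ∃ C > (0:ℝ), ∃ β > (0:ℝ), ∀ p : ℤ, ∀ q : ℕ, 0 < q →
    |ρ - p / q| ≥ C / (q : ℝ) ^ ((2:ℝ) + β)

/-! A hyperbolic periodic point is a transversal zero of the displacement
`x ↦ F^q x - x - p`, so the displacement changes sign near it. The displacement of `F + ω`
depends continuously on `ω`, so it still changes sign, hence vanishes somewhere, for small `ω`;
a lift with a point satisfying `G^q c = c + p` has translation number `p/q`. -/

open Function

theorem exists_neg_and_pos_of_deriv_ne_zero {φ : ℝ → ℝ} {x₀ : ℝ} (hd : deriv φ x₀ ≠ 0)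
    (h0 : φ x₀ = 0) : ∃ a b, φ a < 0 ∧ 0 < φ b := by
  suffices key : ∀ ψ : ℝ → ℝ, 0 < deriv ψ x₀ → ψ x₀ = 0 → ∃ a b, ψ a < 0 ∧ 0 < ψ b by
    rcases hd.lt_or_gt with hneg | hpos
    · obtain ⟨a, b, ha, hb⟩ := key (-φ) (by simpa [deriv.neg'] using hneg) (by simp [h0])
      exact ⟨b, a, by simpa using hb, by simpa using ha⟩
    · exact key φ hpos h0
  intro ψ hpos h0
  have hsign := eventually_nhdsWithin_sign_eq_of_deriv_pos hpos h0
  obtain ⟨a, ha, ha_lt⟩ := ((hsign.filter_mono nhdsWithin_le_nhds).and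
    (self_mem_nhdsWithin : Set.Iio x₀ ∈ 𝓝[<] x₀)).exists
  obtain ⟨b, hb, hb_gt⟩ := ((hsign.filter_mono nhdsWithin_le_nhds).and
    (self_mem_nhdsWithin : Set.Ioi x₀ ∈ 𝓝[>] x₀)).exists
  rw [sign_neg (sub_neg.2 ha_lt), sign_eq_neg_one_iff] at ha
  rw [sign_pos (sub_pos.2 hb_gt), sign_eq_one_iff] at hb
  exact ⟨a, b, ha, hb⟩

theorem eventually_exists_eq_zero_of_neg_of_pos {X : Type*} [TopologicalSpace X]
    {Φ : X → ℝ → ℝ} (hΦ : Continuous (uncurry Φ)) {x₀ : X} {a b : ℝ} (ha : Φ x₀ a < 0)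
    (hb : 0 < Φ x₀ b) : ∀ᶠ x in 𝓝 x₀, ∃ c, Φ x c = 0 := by
  filter_upwards [((hΦ.uncurry_right a).tendsto x₀).eventually_lt_const ha,
    ((hΦ.uncurry_right b).tendsto x₀).eventually_const_lt hb] with x hxa hxb
  obtain ⟨c, -, hc⟩ := intermediate_value_uIcc (hΦ.uncurry_left x).continuousOn
    (Set.mem_uIcc_of_le hxa.le hxb.le)
  exact ⟨c, hc⟩

namespace AnalyticCircleDiffeo

def toCircleDeg1Lift (f : AnalyticCircleDiffeo) : CircleDeg1Lift :=
  ⟨⟨f.toFun, f.strictMono_toFun.monotone⟩, f.map_add_one⟩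

theorem rot_eq_translationNumber (f : AnalyticCircleDiffeo) :
    f.rot = f.toCircleDeg1Lift.translationNumber := by
  have h := f.toCircleDeg1Lift.tendsto_translation_number₀
  simp only [CircleDeg1Lift.coe_pow] at h
  exact h.limUnder_eq

theorem rot_eq_of_iterate_eq_add_int (f : AnalyticCircleDiffeo) {p : ℤ} {q : ℕ} (hq : 0 < q)
    {c : ℝ} (h : f.toFun^[q] c = c + p) : f.rot = p / q := by
  rw [rot_eq_translationNumber]
  exact f.toCircleDeg1Lift.translationNumber_of_map_pow_eq_add_int (x := c)
    (by rwa [CircleDeg1Lift.coe_pow]) hq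

theorem continuous_toFun (f : AnalyticCircleDiffeo) : Continuous f.toFun :=
  continuous_iff_continuousAt.2 fun x => (f.analyticAt_toFun x).continuousAt

theorem analyticAt_iterate (f : AnalyticCircleDiffeo) (n : ℕ) (x : ℝ) :
    AnalyticAt ℝ f.toFun^[n] x := by
  induction n generalizing x with
  | zero => exact analyticAt_id
  | succ n ih =>
    rw [iterate_succ']
    exact (f.analyticAt_toFun _).comp (ih x)

theorem addConst_zero_toFun (f : AnalyticCircleDiffeo) : (f.addConst 0).toFun = f.toFun :=
  funext fun x => add_zero (f.toFun x)

theorem continuous_iterate_addConst (f : AnalyticCircleDiffeo) (n : ℕ) :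
    Continuous fun x : ℝ × ℝ => (f.addConst x.1).toFun^[n] x.2 := by
  induction n with
  | zero => exact continuous_snd
  | succ n ih =>
    simp only [iterate_succ_apply']
    exact (f.continuous_toFun.comp ih).add continuous_fst

end AnalyticCircleDiffeo

open AnalyticCircleDiffeo in
theorem statement7_general (f : AnalyticCircleDiffeo) (p : ℤ) (q : ℕ) (hq : 1 ≤ q) (x₀ : ℝ)
    (hper : f.toFun^[q] x₀ = x₀ + (p : ℝ))
    (hhyp : deriv (f.toFun^[q]) x₀ ≠ 1) :
    ∃ ε > (0 : ℝ), ∀ ω : ℝ, |ω| < ε →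
      ∃ k : ℤ, rot (f.addConst ω) = (p : ℝ) / (q : ℝ) + (k : ℝ) := by
  set displacement : ℝ → ℝ → ℝ := fun ω x => (f.addConst ω).toFun^[q] x - x - p
  have hcont : Continuous (uncurry displacement) :=
    ((f.continuous_iterate_addConst q).sub continuous_snd).sub continuous_const
  have hdisp₀ : displacement 0 = fun x => f.toFun^[q] x - x - p := by
    simp only [displacement, addConst_zero_toFun]
  have hderiv : deriv (displacement 0) x₀ ≠ 0 := by
    have hF := (f.analyticAt_iterate q x₀).differentiableAt.hasDerivAt
    have hd : HasDerivAt (fun x => f.toFun^[q] x - x - p) (deriv f.toFun^[q] x₀ - 1) x₀ :=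
      (hF.sub (hasDerivAt_id' x₀)).sub_const _
    rw [hdisp₀, hd.deriv]
    exact sub_ne_zero.2 hhyp
  obtain ⟨a, b, ha, hb⟩ := exists_neg_and_pos_of_deriv_ne_zero hderiv
    (by simp [hdisp₀, hper])
  obtain ⟨ε, hε, hzero⟩ := Metric.eventually_nhds_iff.1
    (eventually_exists_eq_zero_of_neg_of_pos hcont ha hb)
  refine ⟨ε, hε, fun ω hω => ⟨0, ?_⟩⟩
  obtain ⟨c, hc⟩ := hzero (by rwa [Real.dist_eq, sub_zero])
  rw [(f.addConst ω).rot_eq_of_iterate_eq_add_int hq (c := c) (by linarith [hc]),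
    Int.cast_zero, add_zero]

open AnalyticCircleDiffeo in
/-- If an analytic circle diffeomorphism `f` (with lift `F`) has a
hyperbolic periodic orbit of rotation number `p/q` (i.e. `F^q x₀ = x₀ + p` and
`(F^q)' x₀ ≠ 1` for some `x₀`), then `rot (f + ω) = p/q (mod 1)` for all sufficiently
small real `ω`; in particular `ω = 0` is interior to `I_{p/q}`. -/
theorem statement7 (f : AnalyticCircleDiffeo) (p : ℤ) (q : ℕ) (hq : 1 ≤ q)
    (hpq : Int.gcd p (q : ℤ) = 1) (x₀ : ℝ)
    (hper : f.toFun^[q] x₀ = x₀ + (p : ℝ))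
    (hhyp : deriv (f.toFun^[q]) x₀ ≠ 1) :
    ∃ ε > (0 : ℝ), ∀ ω : ℝ, |ω| < ε →
      ∃ k : ℤ, rot (f.addConst ω) = (p : ℝ) / (q : ℝ) + (k : ℝ) :=
  statement7_general f p q hq x₀ hper hhyp
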